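/- With B₁ = (δ/(k-1))[nδ/(β₀(k-1)) - n + 1], δ > 0, β₀ > 0, n > 1, 1 < k < n, and (β₀/δ)(k-1) > 1: the two conditions B₁ < 0 and δ + B₁ > 0 hold simultaneously if and only if n/(n-1) < (β₀/δ)(k-1) < n/(n-k). -/
import Mathlib

theorem stmt13 (n β₀ δ k : ℝ) (hn : 1 < n) (hβ : 0 < β₀) (hδ : 0 < δ)
    (hk : 1 < k) (hkn : k < n) (hcond : (β₀ / δ) * (k - 1) > 1) :
    ((δ / (k - 1)) * (n * δ / (β₀ * (k - 1)) - n + 1) < 0 ∧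
      0 < δ + (δ / (k - 1)) * (n * δ / (β₀ * (k - 1)) - n + 1)) ↔
    (n / (n - 1) < (β₀ / δ) * (k - 1) ∧ (β₀ / δ) * (k - 1) < n / (n - k)) := by
  have hk1 : 0 < k - 1 := by linarith
  have hn1 : 0 < n - 1 := by linarith
  have hnk : 0 < n - k := by linarith
  have hβk : 0 < β₀ * (k - 1) := by positivity
  have hdk : 0 < δ / (k - 1) := by positivity
  have hB : (δ / (k - 1)) * (n * δ / (β₀ * (k - 1)) - n + 1)
      = (δ / (k - 1)) * ((n * δ - (n - 1) * (β₀ * (k - 1))) / (β₀ * (k - 1))) := by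
    field_simp
    ring_nf
  have e1 : (δ / (k - 1)) * (n * δ / (β₀ * (k - 1)) - n + 1) < 0 ↔
      n * δ - (n - 1) * (β₀ * (k - 1)) < 0 := by
    rw [hB, mul_neg_iff]
    constructor
    · rintro (⟨_, h⟩ | ⟨h1, _⟩)
      · rcases div_neg_iff.mp h with ⟨_, h2⟩ | ⟨h1, _⟩
        · linarith
        · exact h1
      · linarith
    · intro h
      exact Or.inl ⟨hdk, div_neg_of_neg_of_pos h hβk⟩
  have e2 : 0 < δ + (δ / (k - 1)) * (n * δ / (β₀ * (k - 1)) - n + 1) ↔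
      0 < n * δ - (n - k) * (β₀ * (k - 1)) := by
    have hEq : δ + (δ / (k - 1)) * (n * δ / (β₀ * (k - 1)) - n + 1)
        = (δ / (k - 1)) * ((n * δ - (n - k) * (β₀ * (k - 1))) / (β₀ * (k - 1))) := by
      field_simp
      ring
    rw [hEq, mul_pos_iff]
    constructor
    · rintro (⟨_, h⟩ | ⟨h1, _⟩)
      · rcases div_pos_iff.mp h with ⟨h1, _⟩ | ⟨_, h2⟩
        · exact h1
        · linarith
      · linarith
    · intro h
      exact Or.inl ⟨hdk, div_pos h hβk⟩
  have e3 : n / (n - 1) < (β₀ / δ) * (k - 1) ↔ n * δ - (n - 1) * (β₀ * (k - 1)) < 0 := by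
    rw [div_lt_iff₀ hn1, div_mul_eq_mul_div, div_mul_eq_mul_div, lt_div_iff₀ hδ]
    constructor <;> intro h <;> nlinarith
  have e4 : (β₀ / δ) * (k - 1) < n / (n - k) ↔ 0 < n * δ - (n - k) * (β₀ * (k - 1)) := by
    rw [lt_div_iff₀ hnk, div_mul_eq_mul_div, div_mul_eq_mul_div, div_lt_iff₀ hδ]
    constructor <;> intro h <;> nlinarith
  rw [e1, e2, e3, e4]
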